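/- arXiv:0906.3206 — 2 statements merged into one kernel-verified Lean document; each statement's English description precedes it below -/
import Mathlib

section
/- Let H = H^{1,2}(D,ℂ) and for nonzero u ∈ H let P_u h = h − (Re⟨u,h⟩_{L²} / Re⟨u,Mu⟩_{L²})·Mu be the projection onto null(β'(u)). Suppose (u_n) is a sequence in H converging in L² to u ≠ 0 with u ∈ H. Then P_{u_n} → P_u in the operator norm of L(H,H), and moreover there exists a constant m (depending on u and bounds on the sequence) such that ‖P_{u_n} − P_u‖_{L(H,H)} ≤ m‖u_n − u‖_{L²}. -/
/-!
By the adjointness relation, `Re⟨f, ι h⟩ = Re⟨M f, h⟩` and `Re⟨f, ι (M f)⟩ = ‖M f‖²`, so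
`P_u = id - Π (M (ι u))`, where `Π w` is the orthogonal projection of the real inner product space
`H` onto `ℝ ∙ w`. The map `Π` is differentiable away from `0`, hence `Π y - Π w = O(y - w)` near
`w = M (ι u) ≠ 0`; as `M` is bounded, `P_{u_n} - P_u = O(ι u_n - ι u)`. Since `P_{u_n} = P_u`
whenever `ι u_n = ι u`, the finitely many early terms are absorbed into the constant.
-/

open Filter Asymptotics Topology

local notation "⟪" x ", " y "⟫" => @inner ℂ _ _ x y

section LineProjection

variable {F : Type*} [NormedAddCommGroup F] [InnerProductSpace ℝ F]

noncomputable def lineProjection (x : F) : F →L[ℝ] F :=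
  (‖x‖ ^ 2)⁻¹ • ContinuousLinearMap.smulRightL ℝ F F (innerSL ℝ x) x

theorem lineProjection_apply (x h : F) :
    lineProjection x h = (inner ℝ x h / ‖x‖ ^ 2) • x := by
  simp [lineProjection, smul_smul, div_eq_inv_mul]

theorem differentiableAt_lineProjection {x : F} (hx : x ≠ 0) :
    DifferentiableAt ℝ lineProjection x := by
  have hrankOne : DifferentiableAt ℝ
      (fun y : F => ContinuousLinearMap.smulRightL ℝ F F (innerSL ℝ y) y) x :=
    ((ContinuousLinearMap.smulRightL ℝ F F).comp
      (innerSL ℝ : F →L[ℝ] F →L[ℝ] ℝ)).differentiableAt.clm_apply differentiableAt_id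
  exact ((differentiableAt_id.norm_sq ℝ).inv (by simpa using hx)).smul hrankOne

theorem isBigO_lineProjection_sub {x : F} (hx : x ≠ 0) :
    (fun y => lineProjection y - lineProjection x) =O[𝓝 x] (fun y => y - x) :=
  (differentiableAt_lineProjection hx).hasFDerivAt.isBigO_sub

end LineProjection

theorem projections_converge_in_operator_norm_general
    {H L2 : Type*}
    [NormedAddCommGroup H] [InnerProductSpace ℂ H]
    [NormedAddCommGroup L2] [InnerProductSpace ℂ L2]
    (ι : H →L[ℂ] L2) (hι_inj : Function.Injective ι)
    (M : L2 →L[ℂ] H) (hM_inj : Function.Injective M)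
    (hM : ∀ (h : H) (f : L2), (⟪ι h, f⟫).re = (⟪h, M f⟫).re)
    (u : H) (hu : u ≠ 0) (un : ℕ → H)
    (hconv : Tendsto (fun n => ι (un n)) atTop (nhds (ι u)))
    (P : H →L[ℝ] H)
    (hP : ∀ h : H, P h = h - ((⟪ι u, ι h⟫).re / (⟪ι u, ι (M (ι u))⟫).re) • M (ι u))
    (Pn : ℕ → (H →L[ℝ] H))
    (hPn : ∀ (n : ℕ) (h : H), Pn n h =
      h - ((⟪ι (un n), ι h⟫).re / (⟪ι (un n), ι (M (ι (un n)))⟫).re) • M (ι (un n))) :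
    Tendsto Pn atTop (nhds P) ∧
    ∃ m : ℝ, ∀ n : ℕ, ‖Pn n - P‖ ≤ m * ‖ι (un n) - ι u‖ := by
  let : InnerProductSpace ℝ H := InnerProductSpace.complexToReal
  have hproj (f : L2) (h : H) :
      ((⟪f, ι h⟫).re / (⟪f, ι (M f)⟫).re) • M f = lineProjection (M f) h := by
    have hM' (g : L2) (k : H) : (⟪g, ι k⟫).re = (⟪M g, k⟫).re :=
      (inner_re_symm (𝕜 := ℂ) g (ι k)).trans ((hM k g).trans (inner_re_symm (𝕜 := ℂ) k (M g)))
    have hnorm : (⟪M f, M f⟫).re = ‖M f‖ ^ 2 := (norm_sq_eq_re_inner (𝕜 := ℂ) (M f)).symm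
    rw [lineProjection_apply, hM', hM', hnorm]
    rfl
  have hdiff (n : ℕ) :
      Pn n - P = -(lineProjection (M (ι (un n))) - lineProjection (M (ι u))) := by
    ext h
    simp only [sub_apply, neg_apply, hPn, hP, hproj]
    abel
  have hw : M (ι u) ≠ 0 := (map_ne_zero_iff M hM_inj).mpr ((map_ne_zero_iff ι hι_inj).mpr hu)
  have hO : (fun n => Pn n - P) =O[atTop] (fun n => ι (un n) - ι u) := by
    have hMconv := (M.continuous.tendsto _).comp hconv
    refine (((isBigO_lineProjection_sub hw).comp_tendsto hMconv).neg_left.congr_left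
      fun n => (hdiff n).symm).trans ?_
    simp only [Function.comp_def, ← map_sub]
    exact M.isBigO_comp _ atTop
  refine ⟨?_, (isBigO_nat_atTop_iff fun n hn => ?_).mp hO⟩
  · exact tendsto_sub_nhds_zero_iff.mp (hO.trans_tendsto (tendsto_sub_nhds_zero_iff.mpr hconv))
  · rw [hdiff, sub_eq_zero.mp hn, sub_self, neg_zero]

/-- Let `H = H^{1,2}(D,ℂ)` and, for nonzero `u ∈ H`, let
`P_u h = h − (Re⟨u,h⟩_{L²}/Re⟨u,Mu⟩_{L²})·Mu` be the projection onto `null β'(u)`. If `(u_n)`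
is a sequence in `H` converging in `L²` to `u ≠ 0`, then `P_{u_n} → P_u` in the operator norm
of `L(H,H)`, and there is a constant `m` with `‖P_{u_n} − P_u‖ ≤ m‖u_n − u‖_{L²}`.

Here `ι : H ↪ L²` is the continuous injective embedding, `M : L² → H` the bounded injective
operator with `Re⟨h,f⟩_{L²} = Re⟨h,Mf⟩_H` and operator norm `≤ 1` (as a map between any
combination of `L²` and `H`); the projections are given as continuous linear maps `Pn n` and
`P` on `H` (real-linear, as `P_u` is only ℝ-linear) via their explicit formulas. -/
theorem projections_converge_in_operator_norm
    {H L2 : Type*}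
    [NormedAddCommGroup H] [InnerProductSpace ℂ H] [CompleteSpace H]
    [NormedAddCommGroup L2] [InnerProductSpace ℂ L2] [CompleteSpace L2]
    (ι : H →L[ℂ] L2) (hι_inj : Function.Injective ι) (hι_norm : ∀ v : H, ‖ι v‖ ≤ ‖v‖)
    (M : L2 →L[ℂ] H) (hM_inj : Function.Injective M) (hM_norm : ‖M‖ ≤ 1)
    (hM : ∀ (h : H) (f : L2), (⟪ι h, f⟫).re = (⟪h, M f⟫).re)
    (u : H) (hu : u ≠ 0) (un : ℕ → H) (hun : ∀ n, un n ≠ 0)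
    (hconv : Tendsto (fun n => ι (un n)) atTop (nhds (ι u)))
    (P : H →L[ℝ] H)
    (hP : ∀ h : H, P h = h - ((⟪ι u, ι h⟫).re / (⟪ι u, ι (M (ι u))⟫).re) • M (ι u))
    (Pn : ℕ → (H →L[ℝ] H))
    (hPn : ∀ (n : ℕ) (h : H), Pn n h =
      h - ((⟪ι (un n), ι h⟫).re / (⟪ι (un n), ι (M (ι (un n)))⟫).re) • M (ι (un n))) :
    Tendsto Pn atTop (nhds P) ∧
    ∃ m : ℝ, ∀ n : ℕ, ‖Pn n - P‖ ≤ m * ‖ι (un n) - ι u‖ :=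
  projections_converge_in_operator_norm_general ι hι_inj M hM_inj hM u hu un hconv P hP Pn hPn
end

section
/- Let H be a Hilbert space and E : H → ℝ a C² function whose gradient u ↦ ∇E(u) is Lipschitz, and let u ↦ P_u be a Lipschitz map (in operator norm) from H to the bounded operators on H with each P_u an orthogonal projection. Given u₀ ∈ H, the initial value problem z(0) = u₀, z'(t) = −P_{z(t)}∇E(z(t)) has a unique solution z : [0,∞) → H defined for all t ≥ 0, provided E is bounded below. -/
/-!
Write `v u = -P_u ∇E(u)`. Since `‖P_u‖ ≤ 1` for an orthogonal projection, `v` grows at most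
linearly, and as a product of Lipschitz maps it is Lipschitz on every ball. Uniqueness follows
because two solutions on `[0, t]` stay in a common ball. For existence up to time `T`,
Grönwall's inequality confines any solution to a ball whose radius `R` depends only on `‖u₀‖`
and `T`; composing `v` with the radial retraction onto that ball gives a globally Lipschitz
bounded field, for which Picard–Lindelöf gives a solution, and this solution never leaves the
ball before time `T`. The solutions for `T = 1, 2, …` agree by uniqueness and glue to a global
one.
-/

open Set Metric Topology
open scoped NNReal

lemma abs_min_one_div_sub_mul_le {R x y : ℝ} (hR : 0 ≤ R) (hy : 0 ≤ y) (hyx : y ≤ x) :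
    |min 1 (R / x) - min 1 (R / y)| * y ≤ x - y := by
  rcases hy.eq_or_lt with rfl | hy
  · simpa using hyx
  have hx : 0 < x := hy.trans_le hyx
  rcases le_or_gt x R with hxR | hRx
  · rw [min_eq_left ((one_le_div hx).2 hxR), min_eq_left ((one_le_div hy).2 (hyx.trans hxR))]
    simpa using hyx
  have hRx' : R / x ≤ R / y := div_le_div_of_nonneg_left hR hy hyx
  rw [min_eq_right ((div_le_one hx).2 hRx.le),
    abs_of_nonpos (sub_nonpos.2 (le_min ((div_le_one hx).2 hRx.le) hRx'))]
  calc -(R / x - min 1 (R / y)) * y ≤ (R / y - R / x) * y := by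
        gcongr; linarith [min_le_right 1 (R / y)]
    _ = R / x * (x - y) := by field_simp
    _ ≤ 1 * (x - y) := by gcongr; exact (div_le_one hx).2 hRx.le
    _ = x - y := one_mul _

section RadialRetraction

variable {X : Type*} [NormedAddCommGroup X] [NormedSpace ℝ X]

noncomputable def radialRetraction (R : ℝ) (u : X) : X := min 1 (R / ‖u‖) • u

lemma radialRetraction_of_norm_le {R : ℝ} {u : X} (h : ‖u‖ ≤ R) : radialRetraction R u = u := by
  rcases eq_or_ne u 0 with rfl | hu
  · simp [radialRetraction]
  · rw [radialRetraction, min_eq_left ((one_le_div (norm_pos_iff.2 hu)).2 h), one_smul]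

lemma norm_radialRetraction {R : ℝ} (hR : 0 ≤ R) (u : X) :
    ‖radialRetraction R u‖ = min ‖u‖ R := by
  rcases eq_or_ne u 0 with rfl | hu
  · simp [radialRetraction, hR]
  have hu : 0 < ‖u‖ := norm_pos_iff.2 hu
  rw [radialRetraction, norm_smul, Real.norm_of_nonneg (by positivity), min_mul_of_nonneg _ _ hu.le,
    one_mul, div_mul_cancel₀ _ hu.ne']

lemma lipschitzWith_radialRetraction {R : ℝ} (hR : 0 ≤ R) :
    LipschitzWith 2 (radialRetraction (X := X) R) := by
  refine LipschitzWith.of_dist_le_mul fun u v => ?_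
  wlog huv : ‖v‖ ≤ ‖u‖ generalizing u v
  · rw [dist_comm, dist_comm u]; exact this v u (le_of_not_ge huv)
  set c : X → ℝ := fun w => min 1 (R / ‖w‖)
  have hc : c u ≤ 1 := min_le_left _ _
  have hc₀ : 0 ≤ c u := le_min zero_le_one (by positivity)
  rw [dist_eq_norm, dist_eq_norm]
  calc ‖c u • u - c v • v‖ = ‖c u • (u - v) + (c u - c v) • v‖ := by congr 1; module
    _ ≤ c u * ‖u - v‖ + |c u - c v| * ‖v‖ := by
        grw [norm_add_le, norm_smul, norm_smul, Real.norm_of_nonneg hc₀, Real.norm_eq_abs]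
    _ ≤ 1 * ‖u - v‖ + (‖u‖ - ‖v‖) := by
        gcongr; exact abs_min_one_div_sub_mul_le hR (norm_nonneg v) huv
    _ ≤ (2 : ℝ≥0) * ‖u - v‖ := by
        push_cast; linarith [norm_sub_norm_le u v]

end RadialRetraction

lemma LipschitzOnWith.clm_apply_of_norm_le {𝕜 X Y Z : Type*} [NontriviallyNormedField 𝕜]
    [PseudoMetricSpace X] [NormedAddCommGroup Y] [NormedSpace 𝕜 Y] [NormedAddCommGroup Z]
    [NormedSpace 𝕜 Z] {A : X → Y →L[𝕜] Z} {g : X → Y} {s : Set X} {KA Kg : ℝ≥0} {a b : ℝ}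
    (hA : LipschitzOnWith KA A s) (hg : LipschitzOnWith Kg g s) (ha : ∀ u ∈ s, ‖A u‖ ≤ a)
    (hb : ∀ u ∈ s, ‖g u‖ ≤ b) :
    LipschitzOnWith (a * Kg + KA * b).toNNReal (fun u => A u (g u)) s := by
  refine LipschitzOnWith.of_dist_le' fun u hu v hv => ?_
  have hAu := ha u hu
  have hgv := hb v hv
  have hA' : ‖A u - A v‖ ≤ KA * dist u v := dist_eq_norm (A u) _ ▸ hA.dist_le_mul u hu v hv
  have hg' : ‖g u - g v‖ ≤ Kg * dist u v := dist_eq_norm (g u) _ ▸ hg.dist_le_mul u hu v hv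
  have ha₀ : 0 ≤ a := (norm_nonneg _).trans hAu
  calc dist (A u (g u)) (A v (g v)) = ‖A u (g u - g v) + (A u - A v) (g v)‖ := by
        rw [dist_eq_norm, map_sub, sub_apply, sub_add_sub_cancel]
    _ ≤ ‖A u‖ * ‖g u - g v‖ + ‖A u - A v‖ * ‖g v‖ :=
        (norm_add_le _ _).trans (add_le_add ((A u).le_opNorm _) ((A u - A v).le_opNorm _))
    _ ≤ a * (Kg * dist u v) + KA * dist u v * b := by gcongr
    _ = (a * Kg + KA * b) * dist u v := by ring

lemma LipschitzWith.norm_le_mul_norm_add {X Y : Type*} [SeminormedAddCommGroup X]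
    [SeminormedAddCommGroup Y] {g : X → Y} {K : ℝ≥0} (hg : LipschitzWith K g) (u : X) :
    ‖g u‖ ≤ K * ‖u‖ + ‖g 0‖ :=
  calc ‖g u‖ ≤ ‖g u - g 0‖ + ‖g 0‖ := norm_le_norm_sub_add _ _
    _ ≤ K * ‖u‖ + ‖g 0‖ := by grw [hg.norm_sub_le u 0, sub_zero]

lemma eventuallyEq_natCeil_diag {X : Type*} {w : ℕ → ℝ → X}
    (hw : ∀ m n : ℕ, ∀ s : ℝ, 0 ≤ s → s < m + 1 → s < n + 1 → w m s = w n s)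
    {t : ℝ} (ht : 0 ≤ t) : (fun s => w ⌈s⌉₊ s) =ᶠ[𝓝 t] w ⌈t⌉₊ := by
  have hceil : ∀ s : ℝ, s < ⌈s⌉₊ + 1 := fun s => by linarith [Nat.le_ceil s]
  -- Left of `0` the diagonal is `w 0`, which only matters when `t = 0`.
  have hneg : ∀ᶠ s in 𝓝 t, s ≤ 0 → ⌈s⌉₊ = ⌈t⌉₊ := by
    rcases ht.eq_or_lt with rfl | ht
    · exact .of_forall fun s hs => by simp [Nat.ceil_eq_zero.2 hs]
    · filter_upwards [Ioi_mem_nhds ht] with s hs hs0 using absurd hs0 (not_le.2 hs)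
  filter_upwards [hneg, Iio_mem_nhds (hceil t)] with s hs hst
  rcases le_or_gt s 0 with hs0 | hs0
  · simp [hs hs0]
  · exact hw _ _ s hs0.le (hceil s) hst

section AutonomousODE

variable {X : Type*} [NormedAddCommGroup X] [NormedSpace ℝ X] {f : X → X}

theorem ODE_solution_unique_of_lipschitzOnWith_closedBall
    (hf : ∀ R, ∃ L, LipschitzOnWith L f (closedBall 0 R)) {z₁ z₂ : ℝ → X} {a b : ℝ}
    (h₁ : ∀ t ∈ Icc a b, HasDerivAt z₁ (f (z₁ t)) t)
    (h₂ : ∀ t ∈ Icc a b, HasDerivAt z₂ (f (z₂ t)) t)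
    (ha : z₁ a = z₂ a) : EqOn z₁ z₂ (Icc a b) := by
  have hc₁ : ContinuousOn z₁ (Icc a b) := HasDerivAt.continuousOn h₁
  have hc₂ : ContinuousOn z₂ (Icc a b) := HasDerivAt.continuousOn h₂
  obtain ⟨M₁, hM₁⟩ := isCompact_Icc.exists_bound_of_continuousOn hc₁
  obtain ⟨M₂, hM₂⟩ := isCompact_Icc.exists_bound_of_continuousOn hc₂
  obtain ⟨L, hL⟩ := hf (max M₁ M₂)
  refine ODE_solution_unique_of_mem_Icc_right (v := fun _ => f)
    (s := fun _ => closedBall 0 (max M₁ M₂)) (fun _ _ => hL)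
    hc₁ (fun t ht => (h₁ t (Ico_subset_Icc_self ht)).hasDerivWithinAt) (fun t ht => ?_)
    hc₂ (fun t ht => (h₂ t (Ico_subset_Icc_self ht)).hasDerivWithinAt) (fun t ht => ?_) ha
  · exact mem_closedBall_zero_iff.2 ((hM₁ t (Ico_subset_Icc_self ht)).trans (le_max_left _ _))
  · exact mem_closedBall_zero_iff.2 ((hM₂ t (Ico_subset_Icc_self ht)).trans (le_max_right _ _))

variable [CompleteSpace X]

theorem exists_eq_forall_mem_Ioo_hasDerivAt_of_lipschitzWith {L : ℝ≥0}
    (hf : LipschitzWith L f) {C : ℝ≥0} (hC : ∀ u, ‖f u‖ ≤ C) (u₀ : X) (T : ℝ≥0) :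
    ∃ w : ℝ → X, w 0 = u₀ ∧ ∀ t ∈ Ioo (-T : ℝ) T, HasDerivAt w (f (w t)) t := by
  have hpl : IsPicardLindelof (fun _ => f) (tmin := -T) (tmax := T)
      ⟨0, by simp⟩ u₀ (C * T) 0 C L :=
    .of_time_independent (fun u _ => hC u) hf.lipschitzOnWith (by simp)
  obtain ⟨w, hw0, hw⟩ := hpl.exists_eq_forall_mem_Icc_hasDerivWithinAt₀
  exact ⟨w, hw0, fun t ht => (hw t (Ioo_subset_Icc_self ht)).hasDerivAt (Icc_mem_nhds ht.1 ht.2)⟩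

theorem exists_eq_forall_mem_Ico_hasDerivAt_of_norm_le
    (hf : ∀ R, ∃ L, LipschitzOnWith L f (closedBall 0 R)) {K C : ℝ} (hK : 0 ≤ K) (hC : 0 ≤ C)
    (hfK : ∀ u, ‖f u‖ ≤ K * ‖u‖ + C) (u₀ : X) {T : ℝ} (hT : 0 ≤ T) :
    ∃ w : ℝ → X, w 0 = u₀ ∧ ∀ t ∈ Ico 0 T, HasDerivAt w (f (w t)) t := by
  set R := gronwallBound ‖u₀‖ K C T
  have hu₀R : ‖u₀‖ ≤ R := by
    simpa [gronwallBound_x0] using gronwallBound_mono (norm_nonneg u₀) hC hK hT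
  have hR : 0 ≤ R := (norm_nonneg u₀).trans hu₀R
  obtain ⟨L, hL⟩ := hf R
  have hg : LipschitzWith (L * 2) (f ∘ radialRetraction R) :=
    lipschitzOnWith_univ.1 <| hL.comp (lipschitzWith_radialRetraction hR).lipschitzOnWith
      fun u _ => mem_closedBall_zero_iff.2 <|
        (norm_radialRetraction hR u).trans_le (min_le_right _ _)
  have hgK : ∀ u, ‖f (radialRetraction R u)‖ ≤ K * ‖u‖ + C := fun u => by
    grw [hfK, norm_radialRetraction hR, min_le_left]
  have hgC : ∀ u, ‖f (radialRetraction R u)‖ ≤ (K * R + C).toNNReal := fun u => by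
    grw [hfK, norm_radialRetraction hR, min_le_right, ← Real.le_coe_toNNReal]
  obtain ⟨w, hw0, hw⟩ :=
    exists_eq_forall_mem_Ioo_hasDerivAt_of_lipschitzWith hg hgC u₀ T.toNNReal
  rw [Real.coe_toNNReal T hT] at hw
  have hwR : ∀ t ∈ Ico 0 T, ‖w t‖ ≤ R := fun t ht => by
    have hIcc : Icc 0 t ⊆ Ioo (-T) T := fun s hs =>
      ⟨by linarith [hs.1, ht.1, ht.2], hs.2.trans_lt ht.2⟩
    calc ‖w t‖ ≤ gronwallBound ‖u₀‖ K C (t - 0) :=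
          norm_le_gronwallBound_of_norm_deriv_right_le
            (HasDerivAt.continuousOn fun s hs => hw s (hIcc hs))
            (fun s hs => (hw s (hIcc (Ico_subset_Icc_self hs))).hasDerivWithinAt)
            (congrArg norm hw0).le (fun s _ => hgK (w s)) t ⟨ht.1, le_rfl⟩
      _ ≤ R := gronwallBound_mono (norm_nonneg u₀) hC hK (by simpa using ht.2.le)
  refine ⟨w, hw0, fun t ht => ?_⟩
  simpa [radialRetraction_of_norm_le (hwR t ht)] using hw t ⟨by linarith [ht.1, ht.2], ht.2⟩

theorem exists_eq_forall_nonneg_hasDerivAt_of_norm_le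
    (hf : ∀ R, ∃ L, LipschitzOnWith L f (closedBall 0 R)) {K C : ℝ} (hK : 0 ≤ K) (hC : 0 ≤ C)
    (hfK : ∀ u, ‖f u‖ ≤ K * ‖u‖ + C) (u₀ : X) :
    ∃ z : ℝ → X, z 0 = u₀ ∧ ∀ t, 0 ≤ t → HasDerivAt z (f (z t)) t := by
  choose w hw0 hw using fun n : ℕ =>
    exists_eq_forall_mem_Ico_hasDerivAt_of_norm_le hf hK hC hfK u₀ (T := n + 1) (by positivity)
  have hagree : ∀ m n : ℕ, ∀ s : ℝ, 0 ≤ s → s < m + 1 → s < n + 1 → w m s = w n s :=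
    fun m n s hs hm hn => ODE_solution_unique_of_lipschitzOnWith_closedBall hf
      (fun τ hτ => hw m τ ⟨hτ.1, hτ.2.trans_lt hm⟩) (fun τ hτ => hw n τ ⟨hτ.1, hτ.2.trans_lt hn⟩)
      ((hw0 m).trans (hw0 n).symm) ⟨hs, le_rfl⟩
  refine ⟨fun s => w ⌈s⌉₊ s, by simpa using hw0 0, fun t ht => ?_⟩
  exact (hw _ t ⟨ht, by linarith [Nat.le_ceil t]⟩).congr_of_eventuallyEq
    (eventuallyEq_natCeil_diag hagree ht)

end AutonomousODE

theorem steepest_descent_global_existence_uniqueness_general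
    {H : Type*} [NormedAddCommGroup H] [InnerProductSpace ℝ H] [CompleteSpace H]
    (gradE : H → H)
    (hgradLip : ∃ K : NNReal, LipschitzWith K gradE)
    (P : H → (H →L[ℝ] H))
    (hPLip : ∃ K' : NNReal, LipschitzWith K' P)
    (hPproj : ∀ u : H, IsSelfAdjoint (P u) ∧ (P u).comp (P u) = P u)
    (u₀ : H) :
    (∃ z : ℝ → H, z 0 = u₀ ∧
        ∀ t : ℝ, 0 ≤ t → HasDerivAt z (-(P (z t) (gradE (z t)))) t) ∧
    (∀ z₁ z₂ : ℝ → H,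
        (z₁ 0 = u₀ ∧ ∀ t : ℝ, 0 ≤ t → HasDerivAt z₁ (-(P (z₁ t) (gradE (z₁ t)))) t) →
        (z₂ 0 = u₀ ∧ ∀ t : ℝ, 0 ≤ t → HasDerivAt z₂ (-(P (z₂ t) (gradE (z₂ t)))) t) →
        ∀ t : ℝ, 0 ≤ t → z₁ t = z₂ t) := by
  obtain ⟨K, hK⟩ := hgradLip
  obtain ⟨K', hK'⟩ := hPLip
  have hP : ∀ u, ‖P u‖ ≤ 1 := fun u => IsStarProjection.norm_le _ ⟨(hPproj u).2, (hPproj u).1⟩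
  have hgrowth : ∀ u, ‖-(P u (gradE u))‖ ≤ K * ‖u‖ + ‖gradE 0‖ := fun u =>
    calc ‖-(P u (gradE u))‖ ≤ ‖P u‖ * ‖gradE u‖ := by rw [norm_neg]; exact (P u).le_opNorm _
      _ ≤ K * ‖u‖ + ‖gradE 0‖ := by grw [hP u, one_mul, hK.norm_le_mul_norm_add u]
  have hlip : ∀ R, ∃ L, LipschitzOnWith L (fun u => -(P u (gradE u))) (closedBall 0 R) :=
    fun R => ⟨_, (hK'.lipschitzOnWith.clm_apply_of_norm_le hK.lipschitzOnWith (fun u _ => hP u)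
      fun u hu => (hK.norm_le_mul_norm_add u).trans <| by
        grw [mem_closedBall_zero_iff.1 hu]).neg⟩
  refine ⟨exists_eq_forall_nonneg_hasDerivAt_of_norm_le hlip K.2 (norm_nonneg _) hgrowth u₀, ?_⟩
  rintro z₁ z₂ ⟨hz₁0, hz₁⟩ ⟨hz₂0, hz₂⟩ t ht
  exact ODE_solution_unique_of_lipschitzOnWith_closedBall hlip (fun s hs => hz₁ s hs.1)
    (fun s hs => hz₂ s hs.1) (hz₁0.trans hz₂0.symm) ⟨ht, le_rfl⟩

/-- Let `H` be a Hilbert space and `E : H → ℝ` a C² function whose gradient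
`u ↦ ∇E(u)` (the Riesz representative of `E'(u)`, i.e. `E'(u)h = ⟨h, ∇E(u)⟩_H`) is Lipschitz,
and let `u ↦ P_u` be a Lipschitz map (in operator norm) into the bounded operators on `H`,
each `P_u` an orthogonal projection (self-adjoint and idempotent). If `E` is bounded below,
then for every `u₀ ∈ H` the initial value problem
`z(0) = u₀`, `z'(t) = −P_{z(t)} ∇E(z(t))`
has a solution defined for all `t ≥ 0`, unique on `[0,∞)`. -/
theorem steepest_descent_global_existence_uniqueness
    {H : Type*} [NormedAddCommGroup H] [InnerProductSpace ℝ H] [CompleteSpace H]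
    (E : H → ℝ) (hE : ContDiff ℝ 2 E)
    (gradE : H → H)
    (hgrad : ∀ u : H, HasFDerivAt E (innerSL ℝ (gradE u)) u)
    (hgradLip : ∃ K : NNReal, LipschitzWith K gradE)
    (P : H → (H →L[ℝ] H))
    (hPLip : ∃ K' : NNReal, LipschitzWith K' P)
    (hPproj : ∀ u : H, IsSelfAdjoint (P u) ∧ (P u).comp (P u) = P u)
    (hEbdd : BddBelow (Set.range E))
    (u₀ : H) :
    (∃ z : ℝ → H, z 0 = u₀ ∧
        ∀ t : ℝ, 0 ≤ t → HasDerivAt z (-(P (z t) (gradE (z t)))) t) ∧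
    (∀ z₁ z₂ : ℝ → H,
        (z₁ 0 = u₀ ∧ ∀ t : ℝ, 0 ≤ t → HasDerivAt z₁ (-(P (z₁ t) (gradE (z₁ t)))) t) →
        (z₂ 0 = u₀ ∧ ∀ t : ℝ, 0 ≤ t → HasDerivAt z₂ (-(P (z₂ t) (gradE (z₂ t)))) t) →
        ∀ t : ℝ, 0 ≤ t → z₁ t = z₂ t) :=
  steepest_descent_global_existence_uniqueness_general gradE hgradLip P hPLip hPproj u₀
end
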